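/- arXiv:2009.11822 — 3 statements merged into one kernel-verified Lean document; each statement's English description precedes it below -/
import Mathlib

section
/- Let z₀ ∈ ℂ, r₀ > 0, and let W, c₃, c₄ ∈ ℂ with c₃ ≠ 0. Suppose η and Ω are holomorphic on the open ball B(z₀, r₀) and that η(x) = W + c₃(x − z₀)³ + c₄(x − z₀)⁴ + (x − z₀)⁵ · R(x) for all x ∈ B(z₀, r₀), where R is holomorphic on B(z₀, r₀). Then there exists r₁ ∈ (0, r₀] such that for every r with 0 < r < r₁ the derivative η′ is nonvanishing on the circle {x : |x − z₀| = r} and (2πi)⁻¹ · ∮_{|x−z₀|=r} Ω(x)/η′(x) dx = Ω′(z₀)/(3c₃) − 4c₄·Ω(z₀)/(9c₃²). -/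
open Complex Metric

/-!
Differentiating the expansion gives `η' = (x - z₀)² g` with `g` holomorphic
(`cubicExpansionDerivCofactor`), `g z₀ = 3 c₃` and `g' z₀ = 4 c₄`. So `Ω / η'` has a double
pole at `z₀` with numerator `Ω / g` holomorphic near `z₀`, and the Cauchy formula for the
derivative evaluates the integral as
`(Ω / g)' z₀ = (Ω' z₀ · 3 c₃ - Ω z₀ · 4 c₄) / (3 c₃)²`.
-/

theorem circleIntegral_div_sub_sq_mul_eq {U : Set ℂ} (hU : IsOpen U) {z₀ : ℂ} {r : ℝ}
    (hr : 0 < r) (hrU : closedBall z₀ r ⊆ U) {f g : ℂ → ℂ} (hf : DifferentiableOn ℂ f U)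
    (hg : DifferentiableOn ℂ g U) (hg₀ : ∀ x ∈ U, g x ≠ 0) :
    (2 * Real.pi * I)⁻¹ * (∮ x in C(z₀, r), f x / ((x - z₀) ^ 2 * g x)) =
      (deriv f z₀ * g z₀ - f z₀ * deriv g z₀) / g z₀ ^ 2 := by
  have hz₀ : z₀ ∈ U := hrU (mem_closedBall_self hr.le)
  have hU₀ : U ∈ nhds z₀ := hU.mem_nhds hz₀
  have hcauchy := two_pi_I_inv_smul_circleIntegral_sub_sq_inv_smul_of_differentiable hU hrU
    (hf.div hg hg₀) (mem_ball_self hr)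
  rw [deriv_div (hf.differentiableAt hU₀) (hg.differentiableAt hU₀) (hg₀ z₀ hz₀)]
    at hcauchy
  rw [← hcauchy, smul_eq_mul]
  congr 2
  funext x
  rw [smul_eq_mul, div_mul_eq_div_div_swap, div_eq_inv_mul, Pi.div_apply]

section CubicExpansion

variable (z₀ W c₃ c₄ : ℂ) (R : ℂ → ℂ)

def cubicExpansion (x : ℂ) : ℂ :=
  W + c₃ * (x - z₀) ^ 3 + c₄ * (x - z₀) ^ 4 + (x - z₀) ^ 5 * R x

noncomputable def cubicExpansionDerivCofactor (x : ℂ) : ℂ :=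
  3 * c₃ + 4 * c₄ * (x - z₀) + 5 * (x - z₀) ^ 2 * R x + (x - z₀) ^ 3 * deriv R x

variable {z₀ c₃ c₄ R}

theorem hasDerivAt_cubicExpansion {x : ℂ} (hR : DifferentiableAt ℂ R x) :
    HasDerivAt (cubicExpansion z₀ W c₃ c₄ R)
      ((x - z₀) ^ 2 * cubicExpansionDerivCofactor z₀ c₃ c₄ R x) x := by
  have h : HasDerivAt (fun y : ℂ => y - z₀) 1 x := (hasDerivAt_id x).sub_const z₀
  refine (((((h.fun_pow 3).const_mul c₃).const_add W).fun_add
    ((h.fun_pow 4).const_mul c₄)).fun_add ((h.fun_pow 5).fun_mul hR.hasDerivAt)).congr_deriv ?_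
  simp only [cubicExpansionDerivCofactor]
  push_cast
  ring

theorem cubicExpansionDerivCofactor_self :
    cubicExpansionDerivCofactor z₀ c₃ c₄ R z₀ = 3 * c₃ := by
  simp [cubicExpansionDerivCofactor]

theorem hasDerivAt_cubicExpansionDerivCofactor_self (hR : DifferentiableAt ℂ R z₀)
    (hR' : DifferentiableAt ℂ (deriv R) z₀) :
    HasDerivAt (cubicExpansionDerivCofactor z₀ c₃ c₄ R) (4 * c₄) z₀ := by
  have h : HasDerivAt (fun y : ℂ => y - z₀) 1 z₀ := (hasDerivAt_id z₀).sub_const z₀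
  refine ((((h.const_mul (4 * c₄)).const_add (3 * c₃)).fun_add
    (((h.fun_pow 2).const_mul 5).fun_mul hR.hasDerivAt)).fun_add
    ((h.fun_pow 3).fun_mul hR'.hasDerivAt)).congr_deriv ?_
  simp

theorem differentiableOn_cubicExpansionDerivCofactor {U : Set ℂ} (hU : IsOpen U)
    (hR : DifferentiableOn ℂ R U) :
    DifferentiableOn ℂ (cubicExpansionDerivCofactor z₀ c₃ c₄ R) U := by
  have hR' := hR.deriv hU
  unfold cubicExpansionDerivCofactor
  fun_prop

end CubicExpansion

theorem circleIntegral_div_deriv_cubic_expansion_general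
    (z₀ : ℂ) (r₀ : ℝ) (hr₀ : 0 < r₀) (W c₃ c₄ : ℂ) (hc₃ : c₃ ≠ 0)
    (η Ω R : ℂ → ℂ)
    (hΩ : DifferentiableOn ℂ Ω (ball z₀ r₀))
    (hR : DifferentiableOn ℂ R (ball z₀ r₀))
    (hexp : ∀ x ∈ ball z₀ r₀,
      η x = W + c₃ * (x - z₀) ^ 3 + c₄ * (x - z₀) ^ 4 + (x - z₀) ^ 5 * R x) :
    ∃ r₁ ∈ Set.Ioc (0 : ℝ) r₀, ∀ r : ℝ, 0 < r → r < r₁ →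
      (∀ x ∈ sphere z₀ r, deriv η x ≠ 0) ∧
      (2 * Real.pi * Complex.I)⁻¹ * (∮ x in C(z₀, r), Ω x / deriv η x) =
        deriv Ω z₀ / (3 * c₃) - 4 * c₄ * Ω z₀ / (9 * c₃ ^ 2) := by
  set g := cubicExpansionDerivCofactor z₀ c₃ c₄ R
  have hderiv : ∀ x ∈ ball z₀ r₀, deriv η x = (x - z₀) ^ 2 * g x := fun x hx =>
    have hx : ball z₀ r₀ ∈ nhds x := isOpen_ball.mem_nhds hx
    ((hasDerivAt_cubicExpansion W (hR.differentiableAt hx)).congr_of_eventuallyEq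
      (Filter.eventually_of_mem hx hexp)).deriv
  have hz₀ : ball z₀ r₀ ∈ nhds z₀ := isOpen_ball.mem_nhds (mem_ball_self hr₀)
  have hg' : HasDerivAt g (4 * c₄) z₀ := hasDerivAt_cubicExpansionDerivCofactor_self
    (hR.differentiableAt hz₀) ((hR.deriv isOpen_ball).differentiableAt hz₀)
  have hgz₀ : g z₀ = 3 * c₃ := cubicExpansionDerivCofactor_self
  have hg₀ : g z₀ ≠ 0 := hgz₀ ▸ mul_ne_zero three_ne_zero hc₃
  obtain ⟨ε, hε, hgε⟩ := eventually_nhds_iff_ball.mp (hg'.continuousAt.eventually_ne hg₀)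
  have hball : ball z₀ (min ε r₀) ⊆ ball z₀ r₀ := ball_subset_ball (min_le_right _ _)
  have hg_ne : ∀ x ∈ ball z₀ (min ε r₀), g x ≠ 0 := fun x hx =>
    hgε x (ball_subset_ball (min_le_left _ _) hx)
  refine ⟨min ε r₀, ⟨lt_min hε hr₀, min_le_right _ _⟩, fun r hr hrε => ?_⟩
  have hsphere : sphere z₀ r ⊆ ball z₀ (min ε r₀) :=
    sphere_subset_closedBall.trans (closedBall_subset_ball hrε)
  have hderiv_sphere : ∀ x ∈ sphere z₀ r, deriv η x = (x - z₀) ^ 2 * g x := fun x hx =>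
    hderiv x (hball (hsphere hx))
  refine ⟨fun x hx => ?_, ?_⟩
  · rw [hderiv_sphere x hx]
    exact mul_ne_zero (pow_ne_zero _ (sub_ne_zero.mpr (ne_of_mem_sphere hx hr.ne')))
      (hg_ne x (hsphere hx))
  · rw [circleIntegral.integral_congr hr.le fun x hx => by rw [hderiv_sphere x hx],
      circleIntegral_div_sub_sq_mul_eq (g := g) isOpen_ball hr (closedBall_subset_ball hrε)
        (hΩ.mono hball)
        ((differentiableOn_cubicExpansionDerivCofactor isOpen_ball hR).mono hball) hg_ne,
      hgz₀, hg'.deriv]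
    field_simp
    ring

/-- Residue computation behind `∫_C dη^e = 2πi(Ω'(z)/(3α³) − 4β⁴Ω(z)/(9α⁶))`:
if `η(x) = W + c₃(x−z₀)³ + c₄(x−z₀)⁴ + O((x−z₀)⁵)` with `c₃ ≠ 0` and `Ω` is
holomorphic near `z₀`, then for all small circles around `z₀` the derivative `η'`
does not vanish on the circle and
`(2πi)⁻¹ ∮ Ω(x)/η'(x) dx = Ω'(z₀)/(3c₃) − 4c₄Ω(z₀)/(9c₃²)`. -/
theorem circleIntegral_div_deriv_cubic_expansion
    (z₀ : ℂ) (r₀ : ℝ) (hr₀ : 0 < r₀) (W c₃ c₄ : ℂ) (hc₃ : c₃ ≠ 0)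
    (η Ω R : ℂ → ℂ)
    (hη : DifferentiableOn ℂ η (ball z₀ r₀))
    (hΩ : DifferentiableOn ℂ Ω (ball z₀ r₀))
    (hR : DifferentiableOn ℂ R (ball z₀ r₀))
    (hexp : ∀ x ∈ ball z₀ r₀,
      η x = W + c₃ * (x - z₀) ^ 3 + c₄ * (x - z₀) ^ 4 + (x - z₀) ^ 5 * R x) :
    ∃ r₁ ∈ Set.Ioc (0 : ℝ) r₀, ∀ r : ℝ, 0 < r → r < r₁ →
      (∀ x ∈ sphere z₀ r, deriv η x ≠ 0) ∧
      (2 * Real.pi * Complex.I)⁻¹ * (∮ x in C(z₀, r), Ω x / deriv η x) =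
        deriv Ω z₀ / (3 * c₃) - 4 * c₄ * Ω z₀ / (9 * c₃ ^ 2) :=
  circleIntegral_div_deriv_cubic_expansion_general z₀ r₀ hr₀ W c₃ c₄ hc₃ η Ω R hΩ hR hexp
end

section
/- Let z₀ ∈ ℂ, r₀ > 0, W ∈ ℂ, and α ∈ ℂ with α ≠ 0. Suppose y and Ω are holomorphic on the open ball B(z₀, r₀), with y(z₀) = 0 and y′(z₀) = α, and define η(x) := W + y(x)³. Then there exists r₁ ∈ (0, r₀] such that for every r with 0 < r < r₁ the derivative η′ is nonvanishing on the circle {x : |x − z₀| = r} and (2πi)⁻¹ · ∮_{|x−z₀|=r} y(x)·Ω(x)/η′(x) dx = Ω(z₀)/(3α²). -/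
open Complex Metric Filter Topology

/-! Write `y = (x - z₀) g` with `g = dslope y z₀`, so `g z₀ = α`. Then
`η' = 3 y² y' = 3 (x - z₀)² g² y'`, and the integrand is `f x / (x - z₀)` with
`f = Ω / (3 g y')` holomorphic near `z₀`. Cauchy's integral formula gives the value
`f z₀ = Ω z₀ / (3 α²)`. -/

theorem Metric.exists_mem_Ioc_forall_mem_ball_of_eventually {X : Type*} [PseudoMetricSpace X]
    {x : X} {p : X → Prop} (h : ∀ᶠ y in 𝓝 x, p y) {r₀ : ℝ} (hr₀ : 0 < r₀) :
    ∃ r₁ ∈ Set.Ioc 0 r₀, ∀ y ∈ ball x r₁, p y := by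
  obtain ⟨ε, hε, hp⟩ := eventually_nhds_iff_ball.mp h
  exact ⟨min ε r₀, ⟨lt_min hε hr₀, min_le_right _ _⟩,
    fun y hy => hp y (ball_subset_ball (min_le_left _ _) hy)⟩

section
variable {𝕜 : Type*} [NontriviallyNormedField 𝕜]

theorem AnalyticAt.dslope {E : Type*} [NormedAddCommGroup E] [NormedSpace 𝕜 E] {f : 𝕜 → E}
    {a : 𝕜} (hf : AnalyticAt 𝕜 f a) : AnalyticAt 𝕜 (dslope f a) a :=
  let ⟨_, hp⟩ := hf
  ⟨_, hp.has_fpower_series_dslope_fslope⟩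

variable {f : 𝕜 → 𝕜} {a x : 𝕜}

theorem eventually_dslope_ne_zero_and_deriv_ne_zero [CompleteSpace 𝕜]
    (hf : AnalyticAt 𝕜 f a) (hd : deriv f a ≠ 0) :
    ∀ᶠ x in 𝓝 a, dslope f a x ≠ 0 ∧ deriv f x ≠ 0 :=
  (hf.dslope.continuousAt.eventually_ne (by rwa [dslope_same])).and
    (hf.deriv.continuousAt.eventually_ne hd)

theorem sub_mul_dslope_of_eq_zero (ha : f a = 0) (x : 𝕜) : (x - a) * dslope f a x = f x := by
  simpa [ha] using sub_smul_dslope f a x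

theorem deriv_const_add_cube_of_eq_zero (ha : f a = 0) (hf : DifferentiableAt 𝕜 f x) (c : 𝕜) :
    deriv (fun x => c + f x ^ 3) x = 3 * ((x - a) * dslope f a x) ^ 2 * deriv f x := by
  rw [deriv_const_add, deriv_fun_pow hf, sub_mul_dslope_of_eq_zero ha]
  norm_num

theorem mul_div_deriv_const_add_cube_of_eq_zero (ha : f a = 0) (hf : DifferentiableAt 𝕜 f x)
    (hx : x ≠ a) (hg : dslope f a x ≠ 0) (w c : 𝕜) :
    f x * w / deriv (fun x => c + f x ^ 3) x =
      (x - a)⁻¹ * (w / (3 * dslope f a x * deriv f x)) := by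
  have hxa : x - a ≠ 0 := sub_ne_zero.mpr hx
  have hden : 3 * ((x - a) * dslope f a x) ^ 2 * deriv f x =
      ((x - a) * dslope f a x) * ((x - a) * (3 * dslope f a x * deriv f x)) := by ring
  rw [deriv_const_add_cube_of_eq_zero ha hf, ← sub_mul_dslope_of_eq_zero ha x, hden,
    mul_div_mul_left _ _ (mul_ne_zero hxa hg), div_mul_eq_div_div_swap, div_eq_inv_mul]

theorem deriv_const_add_cube_ne_zero [NeZero (3 : 𝕜)] (ha : f a = 0)
    (hf : DifferentiableAt 𝕜 f x) (hx : x ≠ a) (hg : dslope f a x ≠ 0) (hd : deriv f x ≠ 0)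
    (c : 𝕜) :
    deriv (fun x => c + f x ^ 3) x ≠ 0 := by
  rw [deriv_const_add_cube_of_eq_zero ha hf]
  exact mul_ne_zero (mul_ne_zero three_ne_zero
    (pow_ne_zero _ (mul_ne_zero (sub_ne_zero.mpr hx) hg))) hd

end

theorem two_pi_I_inv_mul_circleIntegral_inv_sub_mul {f : ℂ → ℂ} {c : ℂ} {r : ℝ}
    (hf : DifferentiableOn ℂ f (closedBall c r)) (hr : 0 < r) :
    (2 * Real.pi * I)⁻¹ * (∮ x in C(c, r), (x - c)⁻¹ * f x) = f c := by
  have hcauchy := hf.circleIntegral_sub_inv_smul (mem_ball_self hr)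
  simp only [smul_eq_mul] at hcauchy
  rw [hcauchy, inv_mul_cancel_left₀ two_pi_I_ne_zero]

/-- Residue computation behind `∫_C y(x) dη^e = 2πi·Ω(z)/(3α²)`:
if `y` is holomorphic near `z₀` with `y(z₀) = 0`, `y'(z₀) = α ≠ 0`, and
`η(x) := W + y(x)³`, then for all small circles around `z₀` the derivative `η'`
does not vanish on the circle and
`(2πi)⁻¹ ∮ y(x)Ω(x)/η'(x) dx = Ω(z₀)/(3α²)`. -/
theorem circleIntegral_y_div_deriv_cube
    (z₀ : ℂ) (r₀ : ℝ) (hr₀ : 0 < r₀) (W α : ℂ) (hα : α ≠ 0)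
    (y Ω : ℂ → ℂ)
    (hy : DifferentiableOn ℂ y (ball z₀ r₀))
    (hΩ : DifferentiableOn ℂ Ω (ball z₀ r₀))
    (hy0 : y z₀ = 0) (hy' : deriv y z₀ = α) :
    ∃ r₁ ∈ Set.Ioc (0 : ℝ) r₀, ∀ r : ℝ, 0 < r → r < r₁ →
      (∀ x ∈ sphere z₀ r, deriv (fun x => W + y x ^ 3) x ≠ 0) ∧
      (2 * Real.pi * Complex.I)⁻¹ *
          (∮ x in C(z₀, r), y x * Ω x / deriv (fun x => W + y x ^ 3) x) =
        Ω z₀ / (3 * α ^ 2) := by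
  have hz₀ : ball z₀ r₀ ∈ 𝓝 z₀ := isOpen_ball.mem_nhds (mem_ball_self hr₀)
  have hyA : AnalyticAt ℂ y z₀ := hy.analyticAt hz₀
  have hg₀ : dslope y z₀ z₀ = α := by rw [dslope_same, hy']
  set f : ℂ → ℂ := fun x => Ω x / (3 * dslope y z₀ x * deriv y x) with hf
  have hfA : AnalyticAt ℂ f z₀ :=
    (hΩ.analyticAt hz₀).div ((analyticAt_const.mul hyA.dslope).mul hyA.deriv) (by simp [hy', hα])
  have hnear : ∀ᶠ x in 𝓝 z₀, AnalyticAt ℂ y x ∧ AnalyticAt ℂ f x ∧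
      dslope y z₀ x ≠ 0 ∧ deriv y x ≠ 0 :=
    hyA.eventually_analyticAt.and <| hfA.eventually_analyticAt.and <|
      eventually_dslope_ne_zero_and_deriv_ne_zero hyA (hy' ▸ hα)
  obtain ⟨r₁, hr₁, hball⟩ := exists_mem_Ioc_forall_mem_ball_of_eventually hnear hr₀
  refine ⟨r₁, hr₁, fun r hr hrr₁ => ?_⟩
  have hsphere : ∀ x ∈ sphere z₀ r,
      x ≠ z₀ ∧ DifferentiableAt ℂ y x ∧ dslope y z₀ x ≠ 0 ∧ deriv y x ≠ 0 := fun x hx => by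
    obtain ⟨hyx, -, hgx, hdx⟩ :=
      hball x (sphere_subset_closedBall.trans (closedBall_subset_ball hrr₁) hx)
    exact ⟨ne_of_mem_sphere hx hr.ne', hyx.differentiableAt, hgx, hdx⟩
  have hfd : DifferentiableOn ℂ f (closedBall z₀ r) := fun x hx =>
    (hball x (closedBall_subset_ball hrr₁ hx)).2.1.differentiableAt.differentiableWithinAt
  refine ⟨fun x hx => ?_, ?_⟩
  · obtain ⟨hxz, hyx, hgx, hdx⟩ := hsphere x hx
    exact deriv_const_add_cube_ne_zero hy0 hyx hxz hgx hdx W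
  · rw [circleIntegral.integral_congr hr.le fun x hx =>
      mul_div_deriv_const_add_cube_of_eq_zero hy0 (hsphere x hx).2.1 (hsphere x hx).1
        (hsphere x hx).2.2.1 _ _, two_pi_I_inv_mul_circleIntegral_inv_sub_mul hfd hr]
    simp only [hf, hg₀, hy']
    ring
end

section
/- Let U ⊆ ℂ be an open set and g : ℂ → ℂ be holomorphic on U (complex-differentiable at every point of U). Suppose that for every continuously differentiable loop γ : [0,1] → U with γ(0) = γ(1), the real part of ∫₀¹ g(γ(t))·γ′(t) dt vanishes. Then there exists a function u : ℂ → ℝ such that at every z ∈ U, u is (real) Fréchet differentiable with derivative the ℝ-linear map w ↦ Re(g(z)·w). -/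
/-!
Let `ω z = Re (g z · dz)`, a continuous real 1-form on `U`. Join points of `U` by paths whose
extension to `ℝ` is `C¹`, i.e. `C¹` paths that start and end at rest; unlike arbitrary `C¹` paths
these can be concatenated and reversed. Two such paths with the same ends make a `C¹` loop, over
which `∫ ω` vanishes by hypothesis, so `u z = ∫ ω` along any such path from a basepoint chosen
once per class of joinable points is well defined. Near `z₀ ∈ U` this gives
`u z = u z₀ + ∫_[z₀, z] ω` (a straight segment reparametrized to rest at its ends), and the segment
integral has derivative `ω z₀` at `z = z₀`.
-/

open Set Topology AffineMap
open scoped unitInterval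

theorem Path.extend_trans_eq_add_sub {X : Type*} [TopologicalSpace X] [AddCommGroup X]
    {a b c : X} (γ₁ : Path a b) (γ₂ : Path b c) :
    (γ₁.trans γ₂).extend = fun t ↦ γ₁.extend (2 * t) + γ₂.extend (2 * t - 1) - b := by
  funext t
  rcases le_total t (1 / 2) with ht | ht
  · rw [extend_trans_of_le_half _ _ ht, extend_of_le_zero γ₂ (by linarith), add_sub_cancel_right]
  · rw [extend_trans_of_half_le _ _ ht, extend_of_one_le γ₁ (by linarith), add_sub_cancel_left]

section CurveIntegralPotential

variable {E F : Type*} [NormedAddCommGroup E] [NormedSpace ℝ E]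
  [NormedAddCommGroup F] [NormedSpace ℝ F]

namespace Path

variable {a b c : E} {U : Set E}

/-- `γ.extend` is `C¹` on all of `ℝ` exactly when `γ` is `C¹` on `[0, 1]` with zero velocity at
both ends. -/
structure IsC1In (U : Set E) (γ : Path a b) : Prop where
  range_subset : range γ ⊆ U
  contDiff_extend : ContDiff ℝ 1 γ.extend

theorem isC1In_refl (ha : a ∈ U) : (Path.refl a).IsC1In U where
  range_subset := by simpa using ha
  contDiff_extend := by
    rw [refl_extend]
    exact contDiff_const

theorem IsC1In.symm {γ : Path a b} (hγ : γ.IsC1In U) : γ.symm.IsC1In U where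
  range_subset := by simpa using hγ.range_subset
  contDiff_extend := by
    rw [extend_symm]
    exact hγ.contDiff_extend.comp (contDiff_const.sub contDiff_id)

theorem IsC1In.trans {γ₁ : Path a b} {γ₂ : Path b c} (h₁ : γ₁.IsC1In U) (h₂ : γ₂.IsC1In U) :
    (γ₁.trans γ₂).IsC1In U where
  range_subset := by simpa [trans_range] using ⟨h₁.range_subset, h₂.range_subset⟩
  contDiff_extend := by
    rw [extend_trans_eq_add_sub]
    exact ((h₁.contDiff_extend.comp (contDiff_const.mul contDiff_id)).add
      (h₂.contDiff_extend.comp ((contDiff_const.mul contDiff_id).sub contDiff_const))).sub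
      contDiff_const

noncomputable def smoothSegment (a b : E) : Path a b where
  toFun t := lineMap a b (Real.smoothTransition t)
  continuous_toFun := by fun_prop
  source' := by simp
  target' := by simp

theorem extend_smoothSegment (a b : E) :
    (smoothSegment a b).extend = fun t ↦ lineMap a b (Real.smoothTransition t) := by
  funext t
  simp [extend, smoothSegment, IccExtend]

theorem isC1In_smoothSegment (h : segment ℝ a b ⊆ U) : (smoothSegment a b).IsC1In U where
  range_subset := by
    rintro _ ⟨t, rfl⟩
    exact h (lineMap_mem_segment ℝ a b
      ⟨Real.smoothTransition.nonneg _, Real.smoothTransition.le_one _⟩)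
  contDiff_extend := by
    rw [extend_smoothSegment]
    exact (contDiff_lineMap a b).comp Real.smoothTransition.contDiff

end Path

open Path

theorem curveIntegral_smoothSegment (ω : E → E →L[ℝ] F) (a b : E) :
    ∫ᶜ x in smoothSegment a b, ω x = ∫ᶜ x in .segment a b, ω x := by
  set φ := Real.smoothTransition
  have hφ : ∀ t, HasDerivAt φ (deriv φ t) t := fun t ↦
    (Real.smoothTransition.contDiff (n := 1)).differentiable one_ne_zero t |>.hasDerivAt
  have hfun : ∀ t ∈ uIcc (0 : ℝ) 1, curveIntegralFun ω (smoothSegment a b) t =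
      deriv φ t • ω (lineMap a b (φ t)) (b - a) := by
    intro t ht
    rw [uIcc_of_le zero_le_one] at ht
    have hd : HasDerivAt (smoothSegment a b).extend (deriv φ t • (b - a)) t := by
      rw [extend_smoothSegment]
      exact (hasDerivAt_lineMap ..).scomp t (hφ t)
    rw [curveIntegralFun_def, hd.hasDerivWithinAt.derivWithin (uniqueDiffOn_Icc_zero_one t ht),
      map_smul, extend_smoothSegment]
  rw [curveIntegral_segment, curveIntegral_def, intervalIntegral.integral_congr hfun]
  -- `φ` is monotone, so the substitution `s = φ t` needs no regularity of the integrand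
  simpa [φ] using intervalIntegral.integral_deriv_smul_comp_of_deriv_nonneg (a := 0) (b := 1)
    (g := fun s ↦ ω (lineMap a b s) (b - a)) Real.smoothTransition.continuous.continuousOn
    (fun t _ ↦ hφ t) (fun t _ ↦ Real.smoothTransition.monotone.deriv_nonneg)

variable {U : Set E} {ω : E → E →L[ℝ] F}

theorem Path.IsC1In.curveIntegrable {a b : E} {γ : Path a b} (hγ : γ.IsC1In U)
    (hω : ContinuousOn ω U) : CurveIntegrable ω γ :=
  hω.curveIntegrable_of_contDiffOn hγ.contDiff_extend.contDiffOn
    fun t ↦ hγ.range_subset (mem_range_self t)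

theorem curveIntegral_eq_of_isC1In (hω : ContinuousOn ω U)
    (hloop : ∀ (a : E) (γ : Path a a), γ.IsC1In U → ∫ᶜ x in γ, ω x = 0)
    {a b : E} {γ₁ γ₂ : Path a b} (h₁ : γ₁.IsC1In U) (h₂ : γ₂.IsC1In U) :
    ∫ᶜ x in γ₁, ω x = ∫ᶜ x in γ₂, ω x := by
  have := hloop a _ (h₁.trans h₂.symm)
  rwa [curveIntegral_trans (h₁.curveIntegrable hω) (h₂.symm.curveIntegrable hω),
    curveIntegral_symm, ← sub_eq_add_neg, sub_eq_zero] at this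

variable (U) in
def JoinedC1In (a b : E) : Prop := ∃ γ : Path a b, γ.IsC1In U

theorem JoinedC1In.symm {a b : E} : JoinedC1In U a b → JoinedC1In U b a
  | ⟨γ, hγ⟩ => ⟨γ.symm, hγ.symm⟩

theorem JoinedC1In.trans {a b c : E} : JoinedC1In U a b → JoinedC1In U b c → JoinedC1In U a c
  | ⟨γ₁, h₁⟩, ⟨γ₂, h₂⟩ => ⟨γ₁.trans γ₂, h₁.trans h₂⟩

variable (U) in
noncomputable def c1Basepoint (z : E) : E := Classical.epsilon (JoinedC1In U · z)

theorem joinedC1In_c1Basepoint {z : E} (hz : z ∈ U) : JoinedC1In U (c1Basepoint U z) z :=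
  Classical.epsilon_spec (p := (JoinedC1In U · z)) ⟨z, _, isC1In_refl hz⟩

theorem c1Basepoint_eq {z w : E} (h : JoinedC1In U z w) : c1Basepoint U z = c1Basepoint U w := by
  unfold c1Basepoint
  congr 1
  funext b
  exact propext ⟨fun hb ↦ hb.trans h, fun hb ↦ hb.trans h.symm⟩

open Classical in
variable (U ω) in
noncomputable def curveIntegralPotential (z : E) : F :=
  if h : JoinedC1In U (c1Basepoint U z) z then ∫ᶜ x in h.choose, ω x else 0

theorem curveIntegralPotential_eq (hω : ContinuousOn ω U)
    (hloop : ∀ (a : E) (γ : Path a a), γ.IsC1In U → ∫ᶜ x in γ, ω x = 0)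
    {b z : E} (hb : b = c1Basepoint U z) {γ : Path b z} (hγ : γ.IsC1In U) :
    curveIntegralPotential U ω z = ∫ᶜ x in γ, ω x := by
  subst hb
  have h : JoinedC1In U (c1Basepoint U z) z := ⟨γ, hγ⟩
  rw [curveIntegralPotential, dif_pos h]
  exact curveIntegral_eq_of_isC1In hω hloop h.choose_spec hγ

theorem curveIntegralPotential_eq_add_segment (hω : ContinuousOn ω U)
    (hloop : ∀ (a : E) (γ : Path a a), γ.IsC1In U → ∫ᶜ x in γ, ω x = 0)
    {z w : E} (hz : z ∈ U) (hzw : segment ℝ z w ⊆ U) :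
    curveIntegralPotential U ω w = curveIntegralPotential U ω z + ∫ᶜ x in .segment z w, ω x := by
  have hσ := isC1In_smoothSegment hzw
  obtain ⟨γ, hγ⟩ := joinedC1In_c1Basepoint hz
  rw [curveIntegralPotential_eq hω hloop (c1Basepoint_eq ⟨_, hσ⟩) (hγ.trans hσ),
    curveIntegral_trans (hγ.curveIntegrable hω) (hσ.curveIntegrable hω),
    curveIntegralPotential_eq hω hloop rfl hγ, curveIntegral_smoothSegment]

theorem hasFDerivAt_curveIntegralPotential [CompleteSpace F] (hU : IsOpen U)
    (hω : ContinuousOn ω U)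
    (hloop : ∀ (a : E) (γ : Path a a), γ.IsC1In U → ∫ᶜ x in γ, ω x = 0)
    {z : E} (hz : z ∈ U) : HasFDerivAt (curveIntegralPotential U ω) (ω z) z := by
  obtain ⟨ε, hε, hball⟩ := Metric.isOpen_iff.1 hU z hz
  have hnear : curveIntegralPotential U ω =ᶠ[𝓝 z]
      fun w ↦ curveIntegralPotential U ω z + ∫ᶜ x in .segment z w, ω x := by
    filter_upwards [Metric.ball_mem_nhds z hε] with w hw
    exact curveIntegralPotential_eq_add_segment hω hloop hz
      (((convex_ball z ε).segment_subset (Metric.mem_ball_self hε) hw).trans hball)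
  refine ((HasFDerivAt.curveIntegral_segment_source' ?_).const_add _).congr_of_eventuallyEq hnear
  filter_upwards [hU.mem_nhds hz] with w hw
  exact hω.continuousAt (hU.mem_nhds hw)

end CurveIntegralPotential

open Complex

theorem curveIntegral_reCLM_comp_smul_id {U : Set ℂ} {g : ℂ → ℂ} (hg : ContinuousOn g U)
    {a b : ℂ} {γ : Path a b} (hγ : γ.IsC1In U) :
    ∫ᶜ z in γ, reCLM.comp ((g z • ContinuousLinearMap.id ℂ ℂ).restrictScalars ℝ) =
      (∫ t in (0 : ℝ)..1, g (γ.extend t) * derivWithin γ.extend I t).re := by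
  have hmem : MapsTo γ.extend I U := fun t _ ↦ hγ.range_subset (γ.extend_range ▸ mem_range_self t)
  have hint : IntervalIntegrable (fun t ↦ g (γ.extend t) * derivWithin γ.extend I t)
      MeasureTheory.volume 0 1 :=
    ContinuousOn.intervalIntegrable_of_Icc zero_le_one <|
      (hg.comp γ.continuous_extend.continuousOn hmem).mul <|
        hγ.contDiff_extend.contDiffOn.continuousOn_derivWithin uniqueDiffOn_Icc_zero_one le_rfl
  rw [curveIntegral_def, ← reCLM_apply, ← reCLM.intervalIntegral_comp_comm hint]
  simp [curveIntegralFun_def]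

/-- Single-valuedness of the width function: if all periods of the holomorphic
differential `g·dz` over C¹ loops in the open set `U` are purely imaginary, then
there is a globally defined real-valued function `u` whose real Fréchet
derivative at every `z ∈ U` is `w ↦ Re (g z * w)`. -/
theorem exists_global_re_primitive
    (U : Set ℂ) (hU : IsOpen U) (g : ℂ → ℂ)
    (hg : ∀ z ∈ U, DifferentiableAt ℂ g z)
    (hper : ∀ γ : ℝ → ℂ, ContDiffOn ℝ 1 γ (Icc 0 1) →
      (∀ t ∈ Icc (0 : ℝ) 1, γ t ∈ U) → γ 0 = γ 1 →
      (∫ t in (0 : ℝ)..1, g (γ t) * derivWithin γ (Icc 0 1) t).re = 0) :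
    ∃ u : ℂ → ℝ, ∀ z ∈ U,
      HasFDerivAt u
        (Complex.reCLM.comp ((g z • ContinuousLinearMap.id ℂ ℂ).restrictScalars ℝ)) z := by
  set ω : ℂ → ℂ →L[ℝ] ℝ := fun z ↦
    reCLM.comp ((g z • ContinuousLinearMap.id ℂ ℂ).restrictScalars ℝ)
  have hgc : ContinuousOn g U := fun z hz ↦ (hg z hz).continuousAt.continuousWithinAt
  have hω : ContinuousOn ω U := by fun_prop
  have hloop (a : ℂ) (γ : Path a a) (hγ : γ.IsC1In U) : ∫ᶜ x in γ, ω x = 0 := by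
    rw [curveIntegral_reCLM_comp_smul_id hgc hγ]
    exact hper γ.extend hγ.contDiff_extend.contDiffOn
      (fun t _ ↦ hγ.range_subset (γ.extend_range ▸ mem_range_self t)) (by simp)
  exact ⟨curveIntegralPotential U ω, fun z hz ↦ hasFDerivAt_curveIntegralPotential hU hω hloop hz⟩
end
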